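/- Let U_h be the homogenized universal enveloping algebra of sl_2(ℂ) over ℂ[h], with quadratic Casimir P. For μ⁰ ∈ ℝ irrational, the quotient algebras U_h/(P − μ⁰) and U_h/(P − μ⁰ − √2 h) are not isomorphic as ℂ[h]-algebras. -/

import Mathlib

/- STATEMENT 4: Let `U_h` be the homogenized universal enveloping algebra of
`sl₂(ℂ)` over `ℂ[h]` (presented by the basis `X, Y, Z` with `[X,Y]=Z`, `[Y,Z]=X`,
`[Z,X]=Y`, i.e. the complexification of `su(2)`), with quadratic Casimir
`P = X² + Y² + Z²`.  For `μ⁰ ∈ ℝ` irrational, the quotients `U_h/(P − μ⁰)` and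
`U_h/(P − μ⁰ − √2 h)` are not isomorphic as `ℂ[h]`-algebras. -/

noncomputable section

open TensorAlgebra
open scoped TensorProduct

variable (L : Type*) [LieRing L] [LieAlgebra ℂ L]

/-- The homogenization relations `x⊗y − y⊗x − h[x,y]` in the tensor algebra over
`ℂ[h]` of the base-changed Lie algebra `ℂ[h] ⊗ L`. -/
def hrel : TensorAlgebra (Polynomial ℂ) ((Polynomial ℂ) ⊗[ℂ] L) →
    TensorAlgebra (Polynomial ℂ) ((Polynomial ℂ) ⊗[ℂ] L) → Prop := fun a b =>
  ∃ x y : (Polynomial ℂ) ⊗[ℂ] L,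
    a = ι (Polynomial ℂ) x * ι (Polynomial ℂ) y - ι (Polynomial ℂ) y * ι (Polynomial ℂ) x ∧
    b = (Polynomial.X : Polynomial ℂ) • ι (Polynomial ℂ) ⁅x, y⁆

/-- The homogenized universal enveloping algebra `U_h = T(G)[h]/(X⊗Y−Y⊗X−h[X,Y])`. -/
abbrev Uh := RingQuot (hrel L)

/-- The image of a Lie algebra element in `U_h`. -/
def genU (x : L) : Uh L :=
  RingQuot.mkAlgHom (Polynomial ℂ) (hrel L) (ι (Polynomial ℂ) ((1 : Polynomial ℂ) ⊗ₜ[ℂ] x))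

/-- The quotient of `U_h` by the two-sided ideal generated by `P − μ(h)`. -/
abbrev quotCasimir (P : Uh L) (μ : Polynomial ℂ) :=
  RingQuot (fun a b : Uh L => a = P - algebraMap (Polynomial ℂ) (Uh L) μ ∧ b = 0)

/-- `ℂ` as a `ℂ[h]`-algebra via evaluation at `t0`. -/
def CC (_t0 : ℂ) : Type := ℂ

instance (t0 : ℂ) : Field (CC t0) := inferInstanceAs (Field ℂ)

instance (t0 : ℂ) : Algebra (Polynomial ℂ) (CC t0) :=
  ((Polynomial.aeval t0).toRingHom).toAlgebra

lemma CC_algebraMap (t0 : ℂ) (p : Polynomial ℂ) :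
    algebraMap (Polynomial ℂ) (CC t0) p = Polynomial.aeval t0 p := rfl

theorem homogenized_sl2_quotients_not_isomorphic
    (X Y Z : L) (B : Module.Basis (Fin 3) ℂ L)
    (hB : B 0 = X ∧ B 1 = Y ∧ B 2 = Z)
    (hXY : ⁅X, Y⁆ = Z) (hYZ : ⁅Y, Z⁆ = X) (hZX : ⁅Z, X⁆ = Y)
    (μ : ℝ) (hμ : Irrational μ)
    (P : Uh L) (hP : P = genU L X ^ 2 + genU L Y ^ 2 + genU L Z ^ 2) :
    IsEmpty
      (quotCasimir L P (Polynomial.C (μ : ℂ)) ≃ₐ[Polynomial ℂ]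
        quotCasimir L P
          (Polynomial.C (μ : ℂ) + Polynomial.C ((Real.sqrt 2 : ℝ) : ℂ) * Polynomial.X)) := by
  constructor
  intro e
  have hs2 : ((Real.sqrt 2 : ℝ) : ℂ) ≠ 0 := by
    exact_mod_cast Real.sqrt_ne_zero'.mpr (by norm_num)
  have hμ0 : (μ : ℂ) ≠ 0 := by
    exact_mod_cast fun h => (hμ.ne_int 0) (by exact_mod_cast h)
  set t0 : ℂ := -(μ : ℂ) / ((Real.sqrt 2 : ℝ) : ℂ) with ht0
  have ht0ne : t0 ≠ 0 := div_ne_zero (neg_ne_zero.mpr hμ0) hs2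
  -- character on `Uh L`, killing all generators
  obtain ⟨f0, hf0, hf0ι⟩ : { f : _ →ₐ[Polynomial ℂ] CC t0 //
      (∀ ⦃a b⦄, hrel L a b → f a = f b) ∧ ∀ x, f (ι (Polynomial ℂ) x) = 0 } :=
    ⟨TensorAlgebra.lift (Polynomial ℂ) 0, by
      constructor
      · rintro a b ⟨x, y, rfl, rfl⟩
        simp [TensorAlgebra.lift_ι_apply]
      · intro x
        simp [TensorAlgebra.lift_ι_apply]⟩
  set f1 : Uh L →ₐ[Polynomial ℂ] CC t0 :=
    RingQuot.liftAlgHom (Polynomial ℂ) ⟨f0, hf0⟩ with hf1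
  have hf1ι : ∀ x : L, f1 (genU L x) = 0 := by
    intro x
    rw [genU, hf1, RingQuot.liftAlgHom_mkAlgHom_apply, hf0ι]
  have hf1P : f1 P = 0 := by
    rw [hP]; simp [map_add, map_pow, hf1ι]
  have hrel2 : ∀ ⦃a b : Uh L⦄,
      (fun a b : Uh L => a = P - algebraMap (Polynomial ℂ) (Uh L)
        (Polynomial.C (μ : ℂ) + Polynomial.C ((Real.sqrt 2 : ℝ) : ℂ) * Polynomial.X) ∧ b = 0)
        a b → f1 a = f1 b := by
    rintro a b ⟨rfl, rfl⟩
    rw [map_zero]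
    refine (map_sub f1 _ _).trans ?_
    rw [hf1P, AlgHom.commutes, CC_algebraMap]
    simp only [map_add, map_mul, Polynomial.aeval_C, Polynomial.aeval_X]
    show (0 : ℂ) - ((μ : ℂ) + ((Real.sqrt 2 : ℝ) : ℂ) * t0) = 0
    rw [ht0]
    field_simp
    ring
  set f : quotCasimir L P (Polynomial.C (μ : ℂ) + Polynomial.C ((Real.sqrt 2 : ℝ) : ℂ)
      * Polynomial.X) →ₐ[Polynomial ℂ] CC t0 :=
    RingQuot.liftAlgHom (Polynomial ℂ) ⟨f1, hrel2⟩ with hf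
  -- the composite character on the first quotient
  set g : Uh L →ₐ[Polynomial ℂ] CC t0 :=
    (f.comp e.toAlgHom).comp (RingQuot.mkAlgHom (Polynomial ℂ) _) with hg
  set G := g.comp (RingQuot.mkAlgHom (Polynomial ℂ) (hrel L)) with hG
  have hgen : ∀ x : L, g (genU L x) = G (ι (Polynomial ℂ) ((1 : Polynomial ℂ) ⊗ₜ[ℂ] x)) :=
    fun x => rfl
  -- `G` kills all brackets
  have hGbr : ∀ x y : (Polynomial ℂ) ⊗[ℂ] L, G (ι (Polynomial ℂ) ⁅x, y⁆) = 0 := by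
    intro x y
    have h1 : G (ι (Polynomial ℂ) x * ι (Polynomial ℂ) y
          - ι (Polynomial ℂ) y * ι (Polynomial ℂ) x)
        = G ((Polynomial.X : Polynomial ℂ) • ι (Polynomial ℂ) ⁅x, y⁆) :=
      congrArg g (RingQuot.mkAlgHom_rel (Polynomial ℂ) ⟨x, y, rfl, rfl⟩)
    rw [map_sub, map_mul, map_mul, mul_comm, sub_self, map_smul, Algebra.smul_def,
      CC_algebraMap, Polynomial.aeval_X] at h1
    rcases mul_eq_zero.mp h1.symm with h | h
    · exact absurd h ht0ne
    · exact h
  -- hence `g` kills the generators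
  have hgX : g (genU L X) = 0 := by
    have := hGbr ((1 : Polynomial ℂ) ⊗ₜ[ℂ] Y) ((1 : Polynomial ℂ) ⊗ₜ[ℂ] Z)
    rw [LieAlgebra.ExtendScalars.bracket_tmul, one_mul, hYZ] at this
    rw [hgen]; exact this
  have hgY : g (genU L Y) = 0 := by
    have := hGbr ((1 : Polynomial ℂ) ⊗ₜ[ℂ] Z) ((1 : Polynomial ℂ) ⊗ₜ[ℂ] X)
    rw [LieAlgebra.ExtendScalars.bracket_tmul, one_mul, hZX] at this
    rw [hgen]; exact this
  have hgZ : g (genU L Z) = 0 := by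
    have := hGbr ((1 : Polynomial ℂ) ⊗ₜ[ℂ] X) ((1 : Polynomial ℂ) ⊗ₜ[ℂ] Y)
    rw [LieAlgebra.ExtendScalars.bracket_tmul, one_mul, hXY] at this
    rw [hgen]; exact this
  have hgP : g P = 0 := by
    rw [hP]; simp [map_add, map_pow, hgX, hgY, hgZ]
  -- but `g` must send `P` to `μ`, via the defining relation of the first quotient
  have hrel1 : g (P - algebraMap (Polynomial ℂ) (Uh L) (Polynomial.C (μ : ℂ))) = g 0 :=
    congrArg (f.comp e.toAlgHom)
      (RingQuot.mkAlgHom_rel (Polynomial ℂ) (⟨rfl, rfl⟩ :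
        (fun a b : Uh L => a = P - algebraMap (Polynomial ℂ) (Uh L) (Polynomial.C (μ : ℂ))
          ∧ b = 0) _ _))
  rw [map_zero] at hrel1
  have hrel1' := ((map_sub g P _).symm.trans hrel1)
  rw [hgP, AlgHom.commutes, CC_algebraMap, Polynomial.aeval_C] at hrel1'
  change (0 : ℂ) - (algebraMap ℂ ℂ) (μ : ℂ) = 0 at hrel1'
  simp only [zero_sub, neg_eq_zero, Algebra.algebraMap_self, RingHom.id_apply] at hrel1'
  exact hμ0 hrel1'

end
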